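/- Let m ≥ 2 be even and A ∈ S(m,2) with A = x^{⊗m} − y^{⊗m} for linearly independent x, y ∈ ℝ². If A is a Q-tensor, then A is an R₀-tensor. -/

import Mathlib

/-!
Write `a = xᵀu` and `b = yᵀu`. A solution `u` of `TCP(A, 0)` has `uᵀ A u^{m-1} = a^m - b^m = 0`,
so `b = ±a`, and `a = b = 0` forces `u = 0`. As `m - 1` is odd, `A` only sees `x` and `y` up to
sign, so we may take `b = a ≠ 0`; then `A u^{m-1} = a^{m-1} (x - y)`, and complementarity yields
a coordinate `k` with `x_k = y_k` while `a^{m-1} (x_j - y_j) > 0` at the other coordinate `j`.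
After a sign change, `x_k = y_k > 0` and `y_j < x_j`. For such `x, y` the problem `TCP(A, q)`
is unsolvable for `q = e_k - e_j` if `|x_j| < |y_j|` and for `q = e_j - e_k` otherwise,
so `A` is not a Q-tensor.
-/

/-- Action of `A = c₁ x^{⊗m} + c₂ y^{⊗m}` on `u ∈ ℝ²`. -/
def act2 (m : ℕ) (c₁ c₂ : ℝ) (x y u : Fin 2 → ℝ) : Fin 2 → ℝ :=
  fun i => c₁ * x i * (∑ j, x j * u j) ^ (m - 1) +
           c₂ * y i * (∑ j, y j * u j) ^ (m - 1)

/-- `u` solves `TCP(A, q)` in dimension 2. -/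
def tcpSol2 (F : (Fin 2 → ℝ) → (Fin 2 → ℝ)) (q u : Fin 2 → ℝ) : Prop :=
  (∀ i, 0 ≤ u i) ∧ (∀ i, 0 ≤ F u i + q i) ∧ (∑ i, u i * (F u i + q i)) = 0

def IsQTensor2 (F : (Fin 2 → ℝ) → (Fin 2 → ℝ)) : Prop :=
  ∀ q, ∃ u, tcpSol2 F q u

theorem Fin.eq_or_eq_of_ne {k j : Fin 2} (hkj : k ≠ j) (i : Fin 2) : i = k ∨ i = j := by
  omega

theorem Fin.sum_univ_two_of_ne {M : Type*} [AddCommMonoid M] {k j : Fin 2} (hkj : k ≠ j)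
    (f : Fin 2 → M) : ∑ i, f i = f k + f j := by
  rw [← Finset.sum_pair hkj]
  congr
  ext i
  simpa using Fin.eq_or_eq_of_ne hkj i

theorem dotProduct_fin_two_of_ne {k j : Fin 2} (hkj : k ≠ j) (x v : Fin 2 → ℝ) :
    x ⬝ᵥ v = x k * v k + x j * v j :=
  Fin.sum_univ_two_of_ne hkj _

theorem mul_pow_le_mul_pow_of_abs_le {R : Type*} [Ring R] [LinearOrder R] [IsStrictOrderedRing R]
    {a b s t : R} (n : ℕ) (hb : |b| ≤ a) (ht : |t| ≤ s) : t * b ^ n ≤ s * a ^ n :=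
  calc t * b ^ n ≤ |t * b ^ n| := le_abs_self _
    _ = |t| * |b| ^ n := by rw [abs_mul, abs_pow]
    _ ≤ s * a ^ n := mul_le_mul ht (pow_le_pow_left₀ (abs_nonneg b) hb n) (by positivity)
        ((abs_nonneg t).trans ht)

theorem eq_zero_of_dotProduct_eq_zero {x y u : Fin 2 → ℝ} (hxy : LinearIndependent ℝ ![x, y])
    (hx : x ⬝ᵥ u = 0) (hy : y ⬝ᵥ u = 0) : u = 0 := by
  have hM : IsUnit (Matrix.of ![x, y]) := Matrix.linearIndependent_rows_iff_isUnit.1 hxy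
  refine Matrix.mulVec_injective_iff_isUnit.2 hM ?_
  ext i
  fin_cases i <;> simp [Matrix.mulVec, hx, hy]

namespace tcpSol2

variable {F : (Fin 2 → ℝ) → (Fin 2 → ℝ)} {q u : Fin 2 → ℝ}

theorem mul_eq_zero (h : tcpSol2 F q u) (i : Fin 2) : u i * (F u i + q i) = 0 :=
  (Finset.sum_eq_zero_iff_of_nonneg fun i _ => mul_nonneg (h.1 i) (h.2.1 i)).1 h.2.2 i
    (Finset.mem_univ i)

theorem eq_zero_of_pos {i : Fin 2} (h : tcpSol2 F q u) (hi : 0 < F u i + q i) : u i = 0 :=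
  (_root_.mul_eq_zero.1 (h.mul_eq_zero i)).resolve_right hi.ne'

theorem add_eq_zero_of_pos {i : Fin 2} (h : tcpSol2 F q u) (hi : 0 < u i) : F u i + q i = 0 :=
  (_root_.mul_eq_zero.1 (h.mul_eq_zero i)).resolve_left hi.ne'

end tcpSol2

section act2

variable {m : ℕ}

theorem act2_apply (c₁ c₂ : ℝ) (x y u : Fin 2 → ℝ) (i : Fin 2) :
    act2 m c₁ c₂ x y u i = c₁ * x i * (x ⬝ᵥ u) ^ (m - 1) + c₂ * y i * (y ⬝ᵥ u) ^ (m - 1) :=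
  rfl

theorem act2_one_neg_one_apply (x y u : Fin 2 → ℝ) (i : Fin 2) :
    act2 m 1 (-1) x y u i = x i * (x ⬝ᵥ u) ^ (m - 1) - y i * (y ⬝ᵥ u) ^ (m - 1) := by
  rw [act2_apply]
  ring

theorem act2_neg_left (hm : Odd (m - 1)) (c₁ c₂ : ℝ) (x y : Fin 2 → ℝ) :
    act2 m c₁ c₂ (-x) y = act2 m c₁ c₂ x y := by
  ext u i
  rw [act2_apply, act2_apply, neg_dotProduct, hm.neg_pow, Pi.neg_apply]
  ring

theorem act2_neg_right (hm : Odd (m - 1)) (c₁ c₂ : ℝ) (x y : Fin 2 → ℝ) :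
    act2 m c₁ c₂ x (-y) = act2 m c₁ c₂ x y := by
  ext u i
  rw [act2_apply, act2_apply, neg_dotProduct, hm.neg_pow, Pi.neg_apply]
  ring

theorem sum_mul_act2 (hm : m ≠ 0) (c₁ c₂ : ℝ) (x y u : Fin 2 → ℝ) :
    ∑ i, u i * act2 m c₁ c₂ x y u i = c₁ * (x ⬝ᵥ u) ^ m + c₂ * (y ⬝ᵥ u) ^ m := by
  obtain ⟨n, rfl⟩ := Nat.exists_eq_add_one_of_ne_zero hm
  simp only [act2, dotProduct, Fin.sum_univ_two, Nat.add_sub_cancel]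
  ring

end act2

section NotQ

variable {m : ℕ} {x y : Fin 2 → ℝ} {k j : Fin 2}

theorem act2_one_neg_one_apply_nonneg_of_eq_of_lt (hm : Odd (m - 1)) (hkj : k ≠ j)
    (hyk : y k = x k) (hj : y j < x j) (hxk : 0 < x k) {v : Fin 2 → ℝ} (hv : ∀ i, 0 ≤ v i) :
    0 ≤ act2 m 1 (-1) x y v k := by
  have hab : y ⬝ᵥ v ≤ x ⬝ᵥ v := by
    rw [dotProduct_fin_two_of_ne hkj, dotProduct_fin_two_of_ne hkj, hyk]
    nlinarith [hv j]
  rw [act2_one_neg_one_apply, hyk, ← mul_sub]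
  exact mul_nonneg hxk.le (sub_nonneg.2 (hm.pow_le_pow.2 hab))

theorem not_tcpSol2_of_abs_lt (hm : Odd (m - 1)) (hkj : k ≠ j) (hyk : y k = x k)
    (hj : y j < x j) (hxk : 0 < x k) (hlt : |x j| < |y j|) (v : Fin 2 → ℝ) :
    ¬ tcpSol2 (act2 m 1 (-1) x y) (fun i => if i = k then 1 else -1) v := by
  intro hv
  have heven : Even m := by
    obtain ⟨r, hr⟩ := hm
    exact ⟨r + 1, by omega⟩
  have hvk : v k = 0 := hv.eq_zero_of_pos <| by
    simp only [if_pos]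
    linarith [act2_one_neg_one_apply_nonneg_of_eq_of_lt hm hkj hyk hj hxk hv.1]
  have hFj : act2 m 1 (-1) x y v j = (x j ^ m - y j ^ m) * v j ^ (m - 1) := by
    rw [act2_one_neg_one_apply, dotProduct_fin_two_of_ne hkj, dotProduct_fin_two_of_ne hkj, hvk]
    obtain ⟨n, rfl⟩ : ∃ n, m = n + 1 := ⟨m - 1, by have := hm.pos; omega⟩
    simp only [Nat.add_sub_cancel, mul_zero, zero_add, mul_pow, pow_succ]
    ring
  have hpow : x j ^ m ≤ y j ^ m := by
    rw [← heven.pow_abs (x j), ← heven.pow_abs (y j)]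
    exact pow_le_pow_left₀ (abs_nonneg _) hlt.le m
  have hfeas := hv.2.1 j
  simp only [if_neg hkj.symm, hFj] at hfeas
  nlinarith [pow_nonneg (hv.1 j) (m - 1)]

theorem not_tcpSol2_of_abs_le (hkj : k ≠ j) (hyk : y k = x k)
    (hj : y j < x j) (hxk : 0 < x k) (hle : |y j| ≤ |x j|) (v : Fin 2 → ℝ) :
    ¬ tcpSol2 (act2 m 1 (-1) x y) (fun i => if i = k then -1 else 1) v := by
  intro hv
  have hxj : |y j| ≤ x j := by
    cases abs_cases (x j) <;> cases abs_cases (y j) <;> linarith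
  have hvj : 0 < v j := by
    refine (hv.1 j).lt_of_ne' fun hvj => ?_
    have hFk : act2 m 1 (-1) x y v k = 0 := by
      rw [act2_one_neg_one_apply, dotProduct_fin_two_of_ne hkj, dotProduct_fin_two_of_ne hkj,
        hyk, hvj]
      ring
    have hfeas := hv.2.1 k
    simp only [if_pos, hFk] at hfeas
    linarith
  -- `|yᵀv| ≤ xᵀv`: the difference is `(x_j - y_j) v_j` and the sum `2 x_k v_k + (x_j + y_j) v_j`.
  have hFj : 0 ≤ act2 m 1 (-1) x y v j := by
    rw [act2_one_neg_one_apply, sub_nonneg]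
    refine mul_pow_le_mul_pow_of_abs_le _ (abs_le.2 ⟨?_, ?_⟩) hxj <;>
      rw [dotProduct_fin_two_of_ne hkj, dotProduct_fin_two_of_ne hkj, hyk] <;>
      nlinarith [hv.1 k, hv.1 j, abs_le.1 hxj]
  have hcomp := hv.add_eq_zero_of_pos hvj
  simp only [if_neg hkj.symm] at hcomp
  linarith

theorem not_isQTensor2_of_eq_of_lt (hm : Odd (m - 1)) (hkj : k ≠ j) (hyk : y k = x k)
    (hj : y j < x j) (hxk : 0 < x k) : ¬ IsQTensor2 (act2 m 1 (-1) x y) := by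
  intro hQ
  rcases lt_or_ge |x j| |y j| with h | h
  · obtain ⟨v, hv⟩ := hQ _
    exact not_tcpSol2_of_abs_lt hm hkj hyk hj hxk h v hv
  · obtain ⟨v, hv⟩ := hQ _
    exact not_tcpSol2_of_abs_le hkj hyk hj hxk h v hv

end NotQ

theorem not_isQTensor2_of_tcpSol2_zero {m : ℕ} {x y u : Fin 2 → ℝ} (hm : Odd (m - 1))
    (hxy : x ≠ y) (hu : tcpSol2 (act2 m 1 (-1) x y) 0 u) (hyu : y ⬝ᵥ u = x ⬝ᵥ u)
    (hxu : x ⬝ᵥ u ≠ 0) : ¬ IsQTensor2 (act2 m 1 (-1) x y) := by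
  have hF : ∀ i, act2 m 1 (-1) x y u i + (0 : Fin 2 → ℝ) i =
      (x ⬝ᵥ u) ^ (m - 1) * (x i - y i) := by
    intro i
    rw [Pi.zero_apply, add_zero, act2_one_neg_one_apply, hyu]
    ring
  have hpow : (x ⬝ᵥ u) ^ (m - 1) ≠ 0 := pow_ne_zero _ hxu
  obtain ⟨k, hk⟩ : ∃ k, 0 < u k := by
    by_contra! h
    obtain rfl : u = 0 := funext fun i => le_antisymm (h i) (hu.1 i)
    exact hxu (dotProduct_zero x)
  obtain ⟨j, hkj⟩ : ∃ j, k ≠ j := (exists_ne k).imp fun _ => Ne.symm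
  have hyk : y k = x k := by
    have h := hu.add_eq_zero_of_pos hk
    rw [hF, mul_eq_zero, sub_eq_zero] at h
    exact (h.resolve_left hpow).symm
  have hxj : x j ≠ y j := fun h => hxy <| funext fun i => by
    rcases Fin.eq_or_eq_of_ne hkj i with rfl | rfl
    exacts [hyk.symm, h]
  have hFj := (hu.2.1 j).trans_eq (hF j)
  have huj : u j = 0 := hu.eq_zero_of_pos <| by
    rw [hF]
    exact hFj.lt_of_ne' (mul_ne_zero hpow (sub_ne_zero.2 hxj))
  have hxu_eq : x ⬝ᵥ u = x k * u k := by
    rw [dotProduct_fin_two_of_ne hkj, huj, mul_zero, add_zero]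
  rcases lt_or_gt_of_ne (left_ne_zero_of_mul (hxu_eq ▸ hxu)) with hxk | hxk
  · have hneg : (x ⬝ᵥ u) ^ (m - 1) < 0 := hm.pow_neg (hxu_eq ▸ mul_neg_of_neg_of_pos hxk hk)
    rw [← act2_neg_left hm, ← act2_neg_right hm]
    refine not_isQTensor2_of_eq_of_lt hm hkj ?_ ?_ ?_ <;> simp only [Pi.neg_apply]
    · rw [hyk]
    · exact neg_lt_neg (lt_of_le_of_ne (by nlinarith) hxj)
    · linarith
  · have hpos : 0 < (x ⬝ᵥ u) ^ (m - 1) := pow_pos (hxu_eq ▸ mul_pos hxk hk) _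
    exact not_isQTensor2_of_eq_of_lt hm hkj hyk (lt_of_le_of_ne (by nlinarith) hxj.symm) hxk

/-- For even `m ≥ 2` and linearly independent `x, y`, if `A = x^{⊗m} - y^{⊗m}` is a
Q-tensor then it is an R₀-tensor. -/
theorem even_Q_implies_R0 (m : ℕ) (hm : 2 ≤ m) (heven : Even m)
    (x y : Fin 2 → ℝ) (hxy : LinearIndependent ℝ ![x, y])
    (hQ : ∀ q : Fin 2 → ℝ, ∃ u, tcpSol2 (act2 m 1 (-1) x y) q u) :
    ∀ u : Fin 2 → ℝ, tcpSol2 (act2 m 1 (-1) x y) 0 u → u = 0 := by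
  have hm₁ : Odd (m - 1) := Nat.Even.sub_odd (by omega) heven odd_one
  intro u hu
  have hpow : (x ⬝ᵥ u) ^ m = (y ⬝ᵥ u) ^ m := by
    have h := hu.2.2
    simp only [Pi.zero_apply, add_zero, sum_mul_act2 (by omega : m ≠ 0)] at h
    linarith
  by_cases hxu : x ⬝ᵥ u = 0
  · refine eq_zero_of_dotProduct_eq_zero hxy hxu ?_
    rwa [hxu, zero_pow (by omega), eq_comm, pow_eq_zero_iff (by omega)] at hpow
  exfalso
  have hpair := LinearIndependent.pair_iff.1 hxy
  rcases (pow_eq_pow_iff_of_ne_zero (by omega)).1 hpow with h | ⟨h, -⟩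
  · refine not_isQTensor2_of_tcpSol2_zero hm₁ (fun heq => ?_) hu h.symm hxu hQ
    exact one_ne_zero (hpair 1 (-1) (by simp [heq])).1
  · rw [← act2_neg_right hm₁] at hu hQ
    refine not_isQTensor2_of_tcpSol2_zero hm₁ (fun heq => ?_) hu ?_ hxu hQ
    · exact one_ne_zero (hpair 1 1 (by simp [heq])).1
    · rw [neg_dotProduct, h]
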